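/- arXiv:2209.09077 — 5 statements merged into one kernel-verified Lean document; each statement's English description precedes it below -/
import Mathlib

section
/- Under the MES sampling setup, the expected welfare of the multinomial empirical success rule satisfies U_{M*} − Σ_{k=1}^{K} exp(−2·Δ_{M*k}² / (A_k + A_{M*}))·Δ_{M*k} ≤ u ≤ U_{M*}. -/
/-!
The events "arm `k` has the strictly largest empirical welfare" are disjoint and, the ties
being null, cover `Ω` almost surely; so their probabilities `p k` sum to one, `u = ∑ p k * U k`
is an average of the `U k`, whence `u ≤ U M` and `U M - u = ∑ p k * (U M - U k)`.
For `k ≠ M`, choosing `k` forces `Uhat M < Uhat k`, and `Uhat k - Uhat M - (U k - U M)` is a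
weighted sum of independent centred `[0, 1]`-valued samples whose squared weights add up to
`A k + A M`;
Hoeffding's inequality bounds the probability of that event by
`exp (-2 * (U M - U k) ^ 2 / (A k + A M))`.
-/

open MeasureTheory ProbabilityTheory Finset

section

variable {Ω : Type*} [MeasurableSpace Ω] {P : Measure Ω}

theorem sum_measureReal_forall_lt_eq_one [IsProbabilityMeasure P] {ι : Type*} [Fintype ι]
    [Nonempty ι] {f : ι → Ω → ℝ} (hf : ∀ i, Measurable (f i))
    (hties : ∀ i j, i ≠ j → P {ω | f i ω = f j ω} = 0) :
    ∑ k, P.real {ω | ∀ j, j ≠ k → f j ω < f k ω} = 1 := by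
  set E : ι → Set Ω := fun k => {ω | ∀ j, j ≠ k → f j ω < f k ω}
  have hE : ∀ k, MeasurableSet (E k) := fun k => by
    simp only [E, Set.ofPred_forall]
    exact .iInter fun j => .iInter fun _ => measurableSet_lt (hf j) (hf k)
  have hdisj : Pairwise (Function.onFun Disjoint E) := fun i j hij =>
    Set.disjoint_left.2 fun _ hi hj => lt_asymm (hi j hij.symm) (hj i hij)
  have hcover : (⋃ k, E k)ᶜ ⊆ ⋃ (i) (j) (_ : i ≠ j), {ω | f i ω = f j ω} := by
    intro ω hω
    obtain ⟨k, hk⟩ := Finite.exists_max fun i => f i ω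
    obtain ⟨j, hjk, hj⟩ : ∃ j, j ≠ k ∧ ¬ f j ω < f k ω := by
      simp only [Set.mem_compl_iff, Set.mem_iUnion, not_exists] at hω
      simpa [E] using hω k
    simp only [Set.mem_iUnion]
    exact ⟨j, k, hjk, le_antisymm (hk j) (not_lt.1 hj)⟩
  have hnull : P (⋃ k, E k)ᶜ = 0 :=
    measure_mono_null hcover <| measure_iUnion_null fun i => measure_iUnion_null fun j =>
      measure_iUnion_null (hties i j)
  rw [← measureReal_iUnion_fintype hdisj hE, measureReal_def,
    measure_congr (ae_eq_univ.2 hnull), measure_univ, ENNReal.toReal_one]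

theorem measureReal_le_sum_mul_sub_integral_le {ι : Type*} {Y : ι → Ω → ℝ}
    (hindep : iIndepFun Y P) {s : Finset ι} (hmeas : ∀ i ∈ s, AEMeasurable (Y i) P)
    (hY : ∀ i ∈ s, ∀ᵐ ω ∂P, Y i ω ∈ Set.Icc (0 : ℝ) 1) (c : ι → ℝ) {ε : ℝ} (hε : 0 ≤ ε) :
    P.real {ω | ε ≤ ∑ i ∈ s, c i * (Y i ω - P[Y i])}
      ≤ Real.exp (-2 * ε ^ 2 / ∑ i ∈ s, c i ^ 2) := by
  have := hindep.isProbabilityMeasure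
  have hind : iIndepFun (fun i ω => c i * (Y i ω - P[Y i])) P :=
    hindep.comp (fun i y => c i * (y - ∫ ω, Y i ω ∂P)) fun _ => by fun_prop
  have hsub := HasSubgaussianMGF.sum_of_iIndepFun hind fun i hi =>
    (hasSubgaussianMGF_of_mem_Icc (hmeas i hi) (hY i hi)).const_mul (c i)
  refine (hsub.measure_ge_le hε).trans_eq ?_
  have hparam : ∀ i, ((⟨c i ^ 2, sq_nonneg _⟩ * (‖(1 : ℝ) - 0‖₊ / 2) ^ 2 : NNReal) : ℝ)
      = c i ^ 2 / 4 := fun i => by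
    show c i ^ 2 * ((‖(1 : ℝ) - 0‖₊ / 2) ^ 2 : NNReal) = _
    norm_num [div_eq_mul_inv]
  simp only [NNReal.coe_sum, hparam, ← sum_div]
  rw [mul_div_assoc', div_div_eq_mul_div]
  ring_nf

end

noncomputable section

variable {K : ℕ} {Ω : Type*} (π : Fin K → ℝ) (N : Fin K → Fin 2 → ℕ)

def welfare (μ : Fin K → Fin 2 → ℝ) (k : Fin K) : ℝ :=
  (1 - π k) * μ k 0 + π k * μ k 1

def empiricalWelfare (Y : Fin K → Fin 2 → ℕ → Ω → ℝ) (k : Fin K) (ω : Ω) : ℝ :=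
  (1 - π k) * ((N k 0 : ℝ)⁻¹ * ∑ i ∈ range (N k 0), Y k 0 i ω)
    + π k * ((N k 1 : ℝ)⁻¹ * ∑ i ∈ range (N k 1), Y k 1 i ω)

def varianceFactor (k : Fin K) : ℝ :=
  (1 - π k) ^ 2 / (N k 0 : ℝ) + π k ^ 2 / (N k 1 : ℝ)

def samples (k : Fin K) : Finset (Fin K × Fin 2 × ℕ) :=
  (univ.sigma fun t => range (N k t)).map
    ⟨fun x => (k, x.1, x.2), fun x y h => by simpa [Sigma.ext_iff] using h⟩

def sampleWeight (q : Fin K × Fin 2 × ℕ) : ℝ :=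
  ![1 - π q.1, π q.1] q.2.1 / N q.1 q.2.1

variable {π N}

theorem fst_of_mem_samples {k : Fin K} {q : Fin K × Fin 2 × ℕ} (hq : q ∈ samples N k) :
    q.1 = k := by
  obtain ⟨x, -, rfl⟩ := Finset.mem_map.1 hq
  rfl

theorem sum_samples {β : Type*} [AddCommMonoid β] (k : Fin K) (g : Fin K × Fin 2 × ℕ → β) :
    ∑ q ∈ samples N k, g q
      = ∑ i ∈ range (N k 0), g (k, 0, i) + ∑ i ∈ range (N k 1), g (k, 1, i) := by
  rw [samples, sum_map, sum_sigma, Fin.sum_univ_two]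
  rfl

theorem sum_sampleWeight_sq (k : Fin K) :
    ∑ q ∈ samples N k, sampleWeight π N q ^ 2 = varianceFactor π N k := by
  simp only [sum_samples, sampleWeight, varianceFactor, sum_const, card_range, nsmul_eq_mul,
    Matrix.cons_val_zero, Matrix.cons_val_one]
  have hscale : ∀ n a : ℝ, n * (a / n) ^ 2 = a ^ 2 / n := fun n a => by
    rcases eq_or_ne n 0 with rfl | hn
    · simp
    · field_simp
  rw [hscale, hscale]

theorem empiricalWelfare_sub_welfare {k : Fin K} (hN : ∀ t, N k t ≠ 0)
    (Y : Fin K → Fin 2 → ℕ → Ω → ℝ) (μ : Fin K → Fin 2 → ℝ) (ω : Ω) :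
    empiricalWelfare π N Y k ω - welfare π μ k
      = ∑ q ∈ samples N k, sampleWeight π N q * (Y q.1 q.2.1 q.2.2 ω - μ q.1 q.2.1) := by
  simp only [sum_samples, sampleWeight, empiricalWelfare, welfare, ← mul_sum,
    sum_sub_distrib, sum_const, card_range, nsmul_eq_mul, Matrix.cons_val_zero, Matrix.cons_val_one]
  have h0 : (N k 0 : ℝ) ≠ 0 := Nat.cast_ne_zero.2 (hN 0)
  have h1 : (N k 1 : ℝ) ≠ 0 := Nat.cast_ne_zero.2 (hN 1)
  field_simp
  ring

theorem measurable_empiricalWelfare [MeasurableSpace Ω] {Y : Fin K → Fin 2 → ℕ → Ω → ℝ}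
    (hmeas : ∀ k t i, Measurable (Y k t i)) (k : Fin K) :
    Measurable (empiricalWelfare π N Y k) := by
  unfold empiricalWelfare
  fun_prop

theorem measureReal_empiricalWelfare_lt_le [MeasurableSpace Ω] {P : Measure Ω}
    {Y : Fin K → Fin 2 → ℕ → Ω → ℝ}
    (hindep : iIndepFun (fun q : Fin K × Fin 2 × ℕ => Y q.1 q.2.1 q.2.2) P)
    (hmeas : ∀ k t i, Measurable (Y k t i)) (hrange : ∀ k t i ω, Y k t i ω ∈ Set.Icc (0 : ℝ) 1)
    {μ : Fin K → Fin 2 → ℝ} (hmean : ∀ k t i, ∫ ω, Y k t i ω ∂P = μ k t)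
    (hN : ∀ k t, N k t ≠ 0) {k M : Fin K} (hkM : k ≠ M) (hle : welfare π μ k ≤ welfare π μ M) :
    P.real {ω | empiricalWelfare π N Y M ω < empiricalWelfare π N Y k ω}
      ≤ Real.exp (-2 * (welfare π μ M - welfare π μ k) ^ 2
          / (varianceFactor π N k + varianceFactor π N M)) := by
  have := hindep.isProbabilityMeasure
  set c : Fin K × Fin 2 × ℕ → ℝ := fun q =>
    if q.1 = k then sampleWeight π N q else -sampleWeight π N q
  have hdisj : Disjoint (samples N k) (samples N M) := Finset.disjoint_left.2 fun q hk hM =>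
    hkM ((fst_of_mem_samples hk).symm.trans (fst_of_mem_samples hM))
  have hsum : ∀ g : Fin K × Fin 2 × ℕ → ℝ, ∑ q ∈ samples N k ∪ samples N M, c q * g q
      = ∑ q ∈ samples N k, sampleWeight π N q * g q
        - ∑ q ∈ samples N M, sampleWeight π N q * g q := fun g => by
    rw [sum_union hdisj, sub_eq_add_neg, ← sum_neg_distrib]
    congr 1 <;> refine sum_congr rfl fun q hq => ?_
    · simp [c, fst_of_mem_samples hq]
    · simp [c, fst_of_mem_samples hq, hkM.symm]
  have hsq : ∑ q ∈ samples N k ∪ samples N M, c q ^ 2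
      = varianceFactor π N k + varianceFactor π N M := by
    rw [sum_union hdisj, ← sum_sampleWeight_sq, ← sum_sampleWeight_sq]
    congr 1 <;> refine sum_congr rfl fun q _ => ?_ <;> simp only [c] <;> split_ifs <;> ring
  calc P.real {ω | empiricalWelfare π N Y M ω < empiricalWelfare π N Y k ω}
      ≤ P.real {ω | welfare π μ M - welfare π μ k ≤ ∑ q ∈ samples N k ∪ samples N M,
          c q * (Y q.1 q.2.1 q.2.2 ω - ∫ ω', Y q.1 q.2.1 q.2.2 ω' ∂P)} := by
        refine measureReal_mono (fun ω hω => ?_)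
        simp only [Set.mem_ofPred_eq, hmean, hsum, ← empiricalWelfare_sub_welfare (hN _)] at hω ⊢
        linarith
    _ ≤ _ := by
        rw [← hsq]
        exact measureReal_le_sum_mul_sub_integral_le hindep (fun q _ => (hmeas _ _ _).aemeasurable)
          (fun q _ => ae_of_all _ (hrange _ _ _)) c (sub_nonneg.2 hle)

end

theorem mes_expected_welfare_bounds_general
    {Ω : Type*} [MeasurableSpace Ω] (P : Measure Ω) [IsProbabilityMeasure P]
    (K : ℕ)
    (π : Fin K → ℝ)
    (N : Fin K → Fin 2 → ℕ) (hN : ∀ k t, 1 ≤ N k t)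
    (Y : Fin K → Fin 2 → ℕ → Ω → ℝ)
    (hmeas : ∀ k t i, Measurable (Y k t i))
    (hrange : ∀ k t i ω, Y k t i ω ∈ Set.Icc (0 : ℝ) 1)
    (μ : Fin K → Fin 2 → ℝ)
    (hmean : ∀ k t i, ∫ ω, Y k t i ω ∂P = μ k t)
    (hindep : iIndepFun (m := fun _ => inferInstance)
      (fun p : Fin K × Fin 2 × ℕ => Y p.1 p.2.1 p.2.2) P)
    (Uhat : Fin K → Ω → ℝ)
    (hUhat : ∀ k ω, Uhat k ω
      = (1 - π k) * ((N k 0 : ℝ)⁻¹ * ∑ i ∈ Finset.range (N k 0), Y k 0 i ω)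
        + π k * ((N k 1 : ℝ)⁻¹ * ∑ i ∈ Finset.range (N k 1), Y k 1 i ω))
    (U : Fin K → ℝ)
    (hU : ∀ k, U k = (1 - π k) * μ k 0 + π k * μ k 1)
    (A : Fin K → ℝ)
    (hA : ∀ k, A k = (1 - π k) ^ 2 / (N k 0 : ℝ) + (π k) ^ 2 / (N k 1 : ℝ))
    (u : ℝ)
    (hu : u = ∑ k, (P {ω | ∀ j, j ≠ k → Uhat j ω < Uhat k ω}).toReal * U k)
    (hties : ∀ j k, j ≠ k → P {ω | Uhat j ω = Uhat k ω} = 0)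
    (M : Fin K) (hM : ∀ k, U k ≤ U M) :
    U M - ∑ k, Real.exp (-2 * (U M - U k) ^ 2 / (A k + A M)) * (U M - U k) ≤ u
      ∧ u ≤ U M := by
  obtain rfl : Uhat = empiricalWelfare π N Y := funext₂ hUhat
  obtain rfl : U = welfare π μ := funext hU
  obtain rfl : A = varianceFactor π N := funext hA
  set U := welfare π μ
  set A := varianceFactor π N
  have : Nonempty (Fin K) := ⟨M⟩
  set p : Fin K → ℝ := fun k =>
    P.real {ω | ∀ j, j ≠ k → empiricalWelfare π N Y j ω < empiricalWelfare π N Y k ω}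
  have hp : ∑ k, p k = 1 :=
    sum_measureReal_forall_lt_eq_one (measurable_empiricalWelfare hmeas) hties
  have hpk : ∀ k, p k * (U M - U k)
      ≤ Real.exp (-2 * (U M - U k) ^ 2 / (A k + A M)) * (U M - U k) := fun k => by
    rcases eq_or_ne k M with rfl | hkM
    · simp
    refine mul_le_mul_of_nonneg_right ?_ (sub_nonneg.2 (hM k))
    have hsub : {ω | ∀ j, j ≠ k → empiricalWelfare π N Y j ω < empiricalWelfare π N Y k ω}
        ⊆ {ω | empiricalWelfare π N Y M ω < empiricalWelfare π N Y k ω} :=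
      fun ω hω => hω M hkM.symm
    exact (measureReal_mono hsub).trans <| measureReal_empiricalWelfare_lt_le hindep hmeas
      hrange hmean (fun k t => Nat.one_le_iff_ne_zero.1 (hN k t)) hkM (hM k)
  have hgap : U M - u = ∑ k, p k * (U M - U k) := by
    simp only [hu, mul_sub, sum_sub_distrib, ← sum_mul, hp, one_mul]
    rfl
  constructor
  · linarith [sum_le_sum fun k (_ : k ∈ univ) => hpk k]
  · linarith [sum_nonneg fun k (_ : k ∈ univ) =>
      mul_nonneg (measureReal_nonneg : 0 ≤ p k) (sub_nonneg.2 (hM k))]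

/-- Under the MES sampling setup, the expected welfare of the multinomial
empirical success rule satisfies
`U_{M*} − Σ_k exp(−2·Δ_{M*k}² / (A_k + A_{M*}))·Δ_{M*k} ≤ u ≤ U_{M*}`. -/
theorem mes_expected_welfare_bounds
    {Ω : Type*} [MeasurableSpace Ω] (P : Measure Ω) [IsProbabilityMeasure P]
    (K : ℕ) (hK : 1 ≤ K)
    (π : Fin K → ℝ) (hπ : ∀ k, π k ∈ Set.Icc (0 : ℝ) 1)
    (N : Fin K → Fin 2 → ℕ) (hN : ∀ k t, 1 ≤ N k t)
    (Y : Fin K → Fin 2 → ℕ → Ω → ℝ)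
    (hmeas : ∀ k t i, Measurable (Y k t i))
    (hrange : ∀ k t i ω, Y k t i ω ∈ Set.Icc (0 : ℝ) 1)
    (μ : Fin K → Fin 2 → ℝ)
    (hmean : ∀ k t i, ∫ ω, Y k t i ω ∂P = μ k t)
    (hident : ∀ k t i j, P.map (Y k t i) = P.map (Y k t j))
    (hindep : iIndepFun (m := fun _ => inferInstance)
      (fun p : Fin K × Fin 2 × ℕ => Y p.1 p.2.1 p.2.2) P)
    (Uhat : Fin K → Ω → ℝ)
    (hUhat : ∀ k ω, Uhat k ω
      = (1 - π k) * ((N k 0 : ℝ)⁻¹ * ∑ i ∈ Finset.range (N k 0), Y k 0 i ω)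
        + π k * ((N k 1 : ℝ)⁻¹ * ∑ i ∈ Finset.range (N k 1), Y k 1 i ω))
    (U : Fin K → ℝ)
    (hU : ∀ k, U k = (1 - π k) * μ k 0 + π k * μ k 1)
    (A : Fin K → ℝ)
    (hA : ∀ k, A k = (1 - π k) ^ 2 / (N k 0 : ℝ) + (π k) ^ 2 / (N k 1 : ℝ))
    (u : ℝ)
    (hu : u = ∑ k, (P {ω | ∀ j, j ≠ k → Uhat j ω < Uhat k ω}).toReal * U k)
    (hties : ∀ j k, j ≠ k → P {ω | Uhat j ω = Uhat k ω} = 0)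
    (M : Fin K) (hM : ∀ k, U k ≤ U M) :
    U M - ∑ k, Real.exp (-2 * (U M - U k) ^ 2 / (A k + A M)) * (U M - U k) ≤ u
      ∧ u ≤ U M :=
  mes_expected_welfare_bounds_general P K π N hN Y hmeas hrange μ hmean hindep Uhat hUhat U hU A hA
    u hu hties M hM
end

section
/- Under the CMES sampling setup with strata given by a coarser partition Z (with L' cells, cell weights q_1, …, q_{L'} ≥ 0 summing to 1, per-cell treatment ratios π_{k l'} for each rule k, and per-cell samples of sizes N_{k t l'}), the expected welfare u_Z of the MES rule conditional on Z satisfies U_{M*} − Σ_{k=1}^{m} exp(−2·Δ_{M*k}² / {Σ_{l'=1}^{L'} q_{l'}²·(A_{k l'} + A_{M* l'})})·Δ_{M*k} ≤ u_Z ≤ U_{M*}, where U_k := Σ_{l'} q_{l'}·[(1−π_{k l'})·μ_{k 0 l'} + π_{k l'}·μ_{k 1 l'}], M* maximizes U_k, Δ_{M*k} := U_{M*} − U_k, and A_{k l'} := (1−π_{k l'})²/N_{k 0 l'} + π_{k l'}²/N_{k 1 l'}. -/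
/-!
Rule `k` is selected only if `Uhat k > Uhat M`. Up to its mean `U k - U M`, the difference
`Uhat k - Uhat M` is a weighted sum of independent `[0, 1]`-valued observations, an arm-`t`
observation of cell `l` of rule `r` carrying the weight `± cellWeight q π N r t l`. Hoeffding's
inequality therefore bounds the selection probability of a suboptimal `k` by
`exp (-2 Δ² / Σ weights²)`, and the squared weights sum to `Σ l, q l ^ 2 * (A k l + A M l)`.
As ties are null, the selection events partition `Ω` up to a null set, so `uZ` is a convex
combination of the `U k`: it is at most `U M`, and its regret `Σ P(k selected) * Δ k` is at most
the sum of the Hoeffding bounds times `Δ k`.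
-/

open MeasureTheory ProbabilityTheory Finset Function
open scoped NNReal

section Hoeffding

variable {Ω : Type*} [MeasurableSpace Ω] {P : Measure Ω} [IsProbabilityMeasure P]

theorem measureReal_le_sum_mul_sub_integral {ι : Type*} {Y : ι → Ω → ℝ}
    (hindep : iIndepFun Y P) (hmeas : ∀ i, Measurable (Y i))
    (hrange : ∀ i ω, Y i ω ∈ Set.Icc (0 : ℝ) 1) (s : Finset ι) (c : ι → ℝ)
    {ε : ℝ} (hε : 0 ≤ ε) :
    P.real {ω | ε ≤ ∑ i ∈ s, c i * (Y i ω - ∫ ω', Y i ω' ∂P)}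
      ≤ Real.exp (-2 * ε ^ 2 / ∑ i ∈ s, c i ^ 2) := by
  have hsubG : ∀ i ∈ s, HasSubgaussianMGF (fun ω ↦ c i * (Y i ω - ∫ ω', Y i ω' ∂P))
      (‖c i‖₊ ^ 2 / 4) P := fun i _ ↦ by
    convert (hasSubgaussianMGF_of_mem_Icc (μ := P) (hmeas i).aemeasurable
      (ae_of_all _ (hrange i))).const_mul (c i) using 2
    ext
    rw [NNReal.coe_mul ⟨c i ^ 2, sq_nonneg _⟩]
    norm_num [div_eq_mul_inv]
    rfl
  have hindep' : iIndepFun (fun i ω ↦ c i * (Y i ω - ∫ ω', Y i ω' ∂P)) P :=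
    hindep.comp (fun i x ↦ c i * (x - ∫ ω', Y i ω' ∂P)) fun i ↦ by fun_prop
  refine (HasSubgaussianMGF.measure_sum_ge_le_of_iIndepFun hindep' hsubG hε).trans_eq ?_
  push_cast
  simp only [Real.norm_eq_abs, sq_abs, ← Finset.sum_div]
  congr 1
  ring

theorem measureReal_le_sum_mul_sum_range_sub_integral {κ : Type*} [Fintype κ]
    {Y : κ → ℕ → Ω → ℝ} (hindep : iIndepFun (fun p : κ × ℕ ↦ Y p.1 p.2) P)
    (hmeas : ∀ a i, Measurable (Y a i)) (hrange : ∀ a i ω, Y a i ω ∈ Set.Icc (0 : ℝ) 1)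
    (n : κ → ℕ) (c : κ → ℝ) {ε : ℝ} (hε : 0 ≤ ε) :
    P.real {ω | ε ≤ ∑ a, c a * ∑ i ∈ range (n a), (Y a i ω - ∫ ω', Y a i ω' ∂P)}
      ≤ Real.exp (-2 * ε ^ 2 / ∑ a, c a ^ 2 * n a) := by
  classical
  set s : Finset (κ × ℕ) := (univ ×ˢ range (univ.sup n)).filter fun p ↦ p.2 < n p.1
  have hs : ∀ p, p ∈ s ↔ p.1 ∈ univ ∧ p.2 ∈ range (n p.1) := fun p ↦ by
    simpa [s] using fun h ↦ ⟨p.1, h⟩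
  have key := measureReal_le_sum_mul_sub_integral hindep (fun p ↦ hmeas p.1 p.2)
    (fun p ↦ hrange p.1 p.2) s (fun p ↦ c p.1) hε
  simp only [sum_finset_product s univ (fun a ↦ range (n a)) hs] at key
  simpa only [← mul_sum, sum_const, card_range, nsmul_eq_mul, mul_comm] using key

end Hoeffding

section StrictArgmax

variable {Ω ι : Type*} {f : ι → Ω → ℝ}

def strictArgmaxSet (f : ι → Ω → ℝ) (k : ι) : Set Ω :=
  {ω | ∀ j, j ≠ k → f j ω < f k ω}

theorem measurableSet_strictArgmaxSet [MeasurableSpace Ω] [Countable ι]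
    (hf : ∀ i, Measurable (f i)) (k : ι) :
    MeasurableSet (strictArgmaxSet f k) := by
  simp only [strictArgmaxSet, Set.ofPred_forall]
  exact .iInter fun j ↦ .iInter fun _ ↦ measurableSet_lt (hf j) (hf k)

theorem pairwise_disjoint_strictArgmaxSet : Pairwise (Disjoint on (strictArgmaxSet f)) :=
  fun j k hjk ↦ Set.disjoint_left.2 fun _ hj hk ↦ (hj k hjk.symm).not_gt (hk j hjk)

theorem sum_measureReal_strictArgmaxSet_eq_one [MeasurableSpace Ω] [Fintype ι] [Nonempty ι]
    {P : Measure Ω} [IsProbabilityMeasure P] (hf : ∀ i, Measurable (f i))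
    (hties : ∀ i j, i ≠ j → P {ω | f i ω = f j ω} = 0) :
    ∑ k, P.real (strictArgmaxSet f k) = 1 := by
  have hcover :
      (⋃ k, strictArgmaxSet f k)ᶜ ⊆ ⋃ i, ⋃ j, ⋃ (_ : i ≠ j), {ω | f i ω = f j ω} := by
    intro ω hω
    obtain ⟨k, -, hk⟩ := exists_max_image univ (f · ω) univ_nonempty
    simp only [Set.mem_compl_iff, Set.mem_iUnion, not_exists] at hω
    obtain ⟨j, hjk, hle⟩ : ∃ j, j ≠ k ∧ f k ω ≤ f j ω := by
      simpa [strictArgmaxSet] using hω k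
    simp only [Set.mem_iUnion, Set.mem_ofPred_eq]
    exact ⟨j, k, hjk, (hk j (mem_univ j)).antisymm hle⟩
  have hnull : P (⋃ k, strictArgmaxSet f k)ᶜ = 0 :=
    measure_mono_null hcover <| measure_iUnion_null fun i ↦ measure_iUnion_null fun j ↦
      measure_iUnion_null (hties i j)
  have hmeas := measurableSet_strictArgmaxSet hf
  rw [← measureReal_iUnion_fintype pairwise_disjoint_strictArgmaxSet hmeas, measureReal_def,
    (prob_compl_eq_zero_iff (.iUnion hmeas)).1 hnull, ENNReal.toReal_one]

end StrictArgmax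

section Averaging

variable {ι : Type*} [Fintype ι] {p b U : ι → ℝ} {M : ι}

theorem sum_mul_sub_eq_sub_sum_mul (hp : ∑ k, p k = 1) (x : ℝ) :
    ∑ k, p k * (x - U k) = x - ∑ k, p k * U k := by
  simp only [mul_sub, sum_sub_distrib, ← sum_mul, hp, one_mul]

theorem sum_mul_le_of_forall_le (hp0 : ∀ k, 0 ≤ p k) (hp : ∑ k, p k = 1) (hM : ∀ k, U k ≤ U M) :
    ∑ k, p k * U k ≤ U M := by
  have : 0 ≤ ∑ k, p k * (U M - U k) :=
    sum_nonneg fun k _ ↦ mul_nonneg (hp0 k) (sub_nonneg.2 (hM k))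
  linarith [sum_mul_sub_eq_sub_sum_mul (U := U) hp (U M)]

theorem sub_sum_mul_sub_le_sum_mul (hp : ∑ k, p k = 1) (hM : ∀ k, U k ≤ U M)
    (hpb : ∀ k, U k < U M → p k ≤ b k) :
    U M - ∑ k, b k * (U M - U k) ≤ ∑ k, p k * U k := by
  have : ∑ k, p k * (U M - U k) ≤ ∑ k, b k * (U M - U k) := by
    refine sum_le_sum fun k _ ↦ ?_
    rcases (hM k).lt_or_eq with hk | hk
    · exact mul_le_mul_of_nonneg_right (hpb k hk) (sub_nonneg.2 hk.le)
    · simp [hk]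
  linarith [sum_mul_sub_eq_sub_sum_mul (U := U) hp (U M)]

theorem sum_ite_sub_ite_mul [DecidableEq ι] (k M : ι) (g : ι → ℝ) :
    ∑ r, ((if r = k then 1 else 0) - if r = M then 1 else 0) * g r = g k - g M := by
  simp [sub_mul, sum_sub_distrib]

theorem sum_ite_sub_ite_sq_mul [DecidableEq ι] {k M : ι} (hkM : k ≠ M) (g : ι → ℝ) :
    ∑ r, ((if r = k then 1 else 0) - if r = M then 1 else 0) ^ 2 * g r = g k + g M := by
  have hsq : ∀ r, ((if r = k then 1 else 0) - if r = M then (1 : ℝ) else 0) ^ 2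
      = (if r = k then 1 else 0) + if r = M then 1 else 0 := fun r ↦ by
    by_cases hrk : r = k <;> by_cases hrM : r = M <;> simp_all
  simp [hsq, add_mul, sum_add_distrib]

end Averaging

theorem div_sq_mul_self {K : Type*} [Field K] (a b : K) : (a / b) ^ 2 * b = a ^ 2 / b := by
  rcases eq_or_ne b 0 with rfl | hb
  · simp
  · field_simp

section Estimator

variable {Ω : Type*} {L' m : ℕ} (q : Fin L' → ℝ) (π : Fin m → Fin L' → ℝ)
  (N : Fin m → Fin 2 → Fin L' → ℕ)

noncomputable def cellWeight (r : Fin m) (t : Fin 2) (l : Fin L') : ℝ :=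
  q l * ![1 - π r l, π r l] t / N r t l

variable {q π N}

theorem sub_eq_sum_cellWeight_mul {Y : Fin m → Fin 2 → Fin L' → ℕ → Ω → ℝ}
    {μ : Fin m → Fin 2 → Fin L' → ℝ} {Uhat : Fin m → Ω → ℝ} {U : Fin m → ℝ}
    (hN : ∀ k t l, 1 ≤ N k t l)
    (hUhat : ∀ k ω, Uhat k ω
      = ∑ l, q l *
          ((1 - π k l) * ((N k 0 l : ℝ)⁻¹ * ∑ i ∈ range (N k 0 l), Y k 0 l i ω)
            + π k l * ((N k 1 l : ℝ)⁻¹ * ∑ i ∈ range (N k 1 l), Y k 1 l i ω)))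
    (hU : ∀ k, U k = ∑ l, q l * ((1 - π k l) * μ k 0 l + π k l * μ k 1 l))
    (r : Fin m) (ω : Ω) :
    Uhat r ω - U r
      = ∑ t, ∑ l,
          cellWeight q π N r t l * ∑ i ∈ range (N r t l), (Y r t l i ω - μ r t l) := by
  have hN0 : ∀ t l, (N r t l : ℝ) ≠ 0 := fun t l ↦ by have := hN r t l; positivity
  simp only [hUhat, hU, cellWeight, Fin.sum_univ_two, ← sum_add_distrib, ← sum_sub_distrib,
    sum_sub_distrib (s := range _), sum_const, card_range, nsmul_eq_mul]
  refine sum_congr rfl fun l _ ↦ ?_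
  field_simp [hN0 0 l, hN0 1 l]
  simp only [Matrix.cons_val_zero, Matrix.cons_val_one]
  ring

theorem sum_cellWeight_sq_mul {A : Fin m → Fin L' → ℝ}
    (hA : ∀ k l, A k l = (1 - π k l) ^ 2 / (N k 0 l : ℝ) + (π k l) ^ 2 / (N k 1 l : ℝ))
    (r : Fin m) :
    ∑ t, ∑ l, cellWeight q π N r t l ^ 2 * N r t l = ∑ l, q l ^ 2 * A r l := by
  simp only [cellWeight, hA, Fin.sum_univ_two, ← sum_add_distrib]
  refine sum_congr rfl fun l _ ↦ ?_
  simp only [Matrix.cons_val_zero, Matrix.cons_val_one]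
  rw [div_sq_mul_self, div_sq_mul_self]
  ring

theorem measureReal_strictArgmaxSet_le [MeasurableSpace Ω] {P : Measure Ω}
    [IsProbabilityMeasure P] {Y : Fin m → Fin 2 → Fin L' → ℕ → Ω → ℝ}
    {μ : Fin m → Fin 2 → Fin L' → ℝ} {Uhat : Fin m → Ω → ℝ} {U : Fin m → ℝ}
    {A : Fin m → Fin L' → ℝ} (hN : ∀ k t l, 1 ≤ N k t l)
    (hmeas : ∀ k t l i, Measurable (Y k t l i))
    (hrange : ∀ k t l i ω, Y k t l i ω ∈ Set.Icc (0 : ℝ) 1)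
    (hmean : ∀ k t l i, ∫ ω, Y k t l i ω ∂P = μ k t l)
    (hindep : iIndepFun (fun p : Fin m × Fin 2 × Fin L' × ℕ ↦ Y p.1 p.2.1 p.2.2.1 p.2.2.2) P)
    (hUhat : ∀ k ω, Uhat k ω
      = ∑ l, q l *
          ((1 - π k l) * ((N k 0 l : ℝ)⁻¹ * ∑ i ∈ range (N k 0 l), Y k 0 l i ω)
            + π k l * ((N k 1 l : ℝ)⁻¹ * ∑ i ∈ range (N k 1 l), Y k 1 l i ω)))
    (hU : ∀ k, U k = ∑ l, q l * ((1 - π k l) * μ k 0 l + π k l * μ k 1 l))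
    (hA : ∀ k l, A k l = (1 - π k l) ^ 2 / (N k 0 l : ℝ) + (π k l) ^ 2 / (N k 1 l : ℝ))
    {k M : Fin m} (hk : U k < U M) :
    P.real (strictArgmaxSet Uhat k)
      ≤ Real.exp (-2 * (U M - U k) ^ 2 / ∑ l, q l ^ 2 * (A k l + A M l)) := by
  classical
  have hkM : k ≠ M := fun h ↦ hk.ne (congrArg U h)
  set δ : Fin m → ℝ := fun r ↦ (if r = k then 1 else 0) - if r = M then 1 else 0
  set c : Fin m × Fin 2 × Fin L' → ℝ := fun a ↦ δ a.1 * cellWeight q π N a.1 a.2.1 a.2.2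
  have hcontrast : ∀ ω, ∑ a, c a * ∑ i ∈ range (N a.1 a.2.1 a.2.2),
      (Y a.1 a.2.1 a.2.2 i ω - μ a.1 a.2.1 a.2.2) = (Uhat k ω - U k) - (Uhat M ω - U M) := by
    intro ω
    simp only [Fintype.sum_prod_type, c, mul_assoc, ← mul_sum,
      ← sub_eq_sum_cellWeight_mul hN hUhat hU]
    exact sum_ite_sub_ite_mul k M _
  have hvar : ∑ a, c a ^ 2 * N a.1 a.2.1 a.2.2 = ∑ l, q l ^ 2 * (A k l + A M l) := by
    simp only [Fintype.sum_prod_type, c, mul_pow, mul_assoc, ← mul_sum, sum_cellWeight_sq_mul hA,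
      mul_add, sum_add_distrib]
    exact sum_ite_sub_ite_sq_mul hkM _
  have hindep' : iIndepFun (fun p : (Fin m × Fin 2 × Fin L') × ℕ ↦
      Y p.1.1 p.1.2.1 p.1.2.2 p.2) P :=
    hindep.precomp
      (g := fun p : (Fin m × Fin 2 × Fin L') × ℕ ↦ (p.1.1, p.1.2.1, p.1.2.2, p.2))
      fun ⟨⟨_, _, _⟩, _⟩ ⟨⟨_, _, _⟩, _⟩ h ↦ by simpa [and_assoc] using h
  have hbound := measureReal_le_sum_mul_sum_range_sub_integral
    (Y := fun a ↦ Y a.1 a.2.1 a.2.2) hindep'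
    (fun _ i ↦ hmeas _ _ _ i) (fun _ i ↦ hrange _ _ _ i) (fun a ↦ N a.1 a.2.1 a.2.2) c
    (sub_nonneg.2 hk.le)
  simp only [hmean, hcontrast, hvar] at hbound
  refine (measureReal_mono fun ω hω ↦ ?_).trans hbound
  have := hω M hkM.symm
  simp only [Set.mem_ofPred_eq]
  linarith

end Estimator

theorem cmes_coarse_partition_expected_welfare_bounds_general
    {Ω : Type*} [MeasurableSpace Ω] (P : Measure Ω) [IsProbabilityMeasure P]
    (L' : ℕ)
    (q : Fin L' → ℝ)
    (m : ℕ)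
    (π : Fin m → Fin L' → ℝ)
    (N : Fin m → Fin 2 → Fin L' → ℕ) (hN : ∀ k t l, 1 ≤ N k t l)
    (Y : Fin m → Fin 2 → Fin L' → ℕ → Ω → ℝ)
    (hmeas : ∀ k t l i, Measurable (Y k t l i))
    (hrange : ∀ k t l i ω, Y k t l i ω ∈ Set.Icc (0 : ℝ) 1)
    (μ : Fin m → Fin 2 → Fin L' → ℝ)
    (hmean : ∀ k t l i, ∫ ω, Y k t l i ω ∂P = μ k t l)
    (hindep : iIndepFun
      (fun q : Fin m × Fin 2 × Fin L' × ℕ => Y q.1 q.2.1 q.2.2.1 q.2.2.2) P)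
    (Uhat : Fin m → Ω → ℝ)
    (hUhat : ∀ k ω, Uhat k ω
      = ∑ l, q l *
          ((1 - π k l) * ((N k 0 l : ℝ)⁻¹ * ∑ i ∈ Finset.range (N k 0 l), Y k 0 l i ω)
            + π k l * ((N k 1 l : ℝ)⁻¹ * ∑ i ∈ Finset.range (N k 1 l), Y k 1 l i ω)))
    (U : Fin m → ℝ)
    (hU : ∀ k, U k = ∑ l, q l * ((1 - π k l) * μ k 0 l + π k l * μ k 1 l))
    (A : Fin m → Fin L' → ℝ)
    (hA : ∀ k l, A k l = (1 - π k l) ^ 2 / (N k 0 l : ℝ) + (π k l) ^ 2 / (N k 1 l : ℝ))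
    (uZ : ℝ)
    (huZ : uZ = ∑ k, (P {ω | ∀ j, j ≠ k → Uhat j ω < Uhat k ω}).toReal * U k)
    (hties : ∀ j k, j ≠ k → P {ω | Uhat j ω = Uhat k ω} = 0)
    (M : Fin m) (hM : ∀ k, U k ≤ U M) :
    U M - ∑ k, Real.exp (-2 * (U M - U k) ^ 2 / ∑ l, (q l) ^ 2 * (A k l + A M l))
        * (U M - U k) ≤ uZ
      ∧ uZ ≤ U M := by
  have hUhat_meas : ∀ k, Measurable (Uhat k) := fun k ↦ by
    rw [funext (hUhat k)]
    fun_prop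
  have : Nonempty (Fin m) := ⟨M⟩
  have hsum := sum_measureReal_strictArgmaxSet_eq_one hUhat_meas hties (P := P)
  change uZ = ∑ k, P.real (strictArgmaxSet Uhat k) * U k at huZ
  rw [huZ]
  exact ⟨sub_sum_mul_sub_le_sum_mul hsum hM fun k hk ↦
      measureReal_strictArgmaxSet_le hN hmeas hrange hmean hindep hUhat hU hA hk,
    sum_mul_le_of_forall_le (fun _ ↦ measureReal_nonneg) hsum hM⟩

/-- Under the CMES sampling setup with strata given by a coarser
partition `Z` (with `L'` cells, cell weights `q`, per-cell ratios `π` and samples of sizes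
`N`), the expected welfare `u_Z` of the MES rule conditional on `Z` satisfies
`U_{M*} − Σ_k exp(−2·Δ_{M*k}² / Σ_{l'} q_{l'}²·(A_{k l'}+A_{M* l'}))·Δ_{M*k} ≤ u_Z ≤ U_{M*}`. -/
theorem cmes_coarse_partition_expected_welfare_bounds
    {Ω : Type*} [MeasurableSpace Ω] (P : Measure Ω) [IsProbabilityMeasure P]
    (L' : ℕ) (hL' : 1 ≤ L')
    (q : Fin L' → ℝ) (hq : ∀ l, 0 ≤ q l) (hqsum : ∑ l, q l = 1)
    (m : ℕ) (hm : 1 ≤ m)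
    (π : Fin m → Fin L' → ℝ) (hπ : ∀ k l, π k l ∈ Set.Icc (0 : ℝ) 1)
    (N : Fin m → Fin 2 → Fin L' → ℕ) (hN : ∀ k t l, 1 ≤ N k t l)
    (Y : Fin m → Fin 2 → Fin L' → ℕ → Ω → ℝ)
    (hmeas : ∀ k t l i, Measurable (Y k t l i))
    (hrange : ∀ k t l i ω, Y k t l i ω ∈ Set.Icc (0 : ℝ) 1)
    (μ : Fin m → Fin 2 → Fin L' → ℝ)
    (hmean : ∀ k t l i, ∫ ω, Y k t l i ω ∂P = μ k t l)
    (hident : ∀ k t l i j, P.map (Y k t l i) = P.map (Y k t l j))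
    (hindep : iIndepFun
      (fun q : Fin m × Fin 2 × Fin L' × ℕ => Y q.1 q.2.1 q.2.2.1 q.2.2.2) P)
    (Uhat : Fin m → Ω → ℝ)
    (hUhat : ∀ k ω, Uhat k ω
      = ∑ l, q l *
          ((1 - π k l) * ((N k 0 l : ℝ)⁻¹ * ∑ i ∈ Finset.range (N k 0 l), Y k 0 l i ω)
            + π k l * ((N k 1 l : ℝ)⁻¹ * ∑ i ∈ Finset.range (N k 1 l), Y k 1 l i ω)))
    (U : Fin m → ℝ)
    (hU : ∀ k, U k = ∑ l, q l * ((1 - π k l) * μ k 0 l + π k l * μ k 1 l))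
    (A : Fin m → Fin L' → ℝ)
    (hA : ∀ k l, A k l = (1 - π k l) ^ 2 / (N k 0 l : ℝ) + (π k l) ^ 2 / (N k 1 l : ℝ))
    (uZ : ℝ)
    (huZ : uZ = ∑ k, (P {ω | ∀ j, j ≠ k → Uhat j ω < Uhat k ω}).toReal * U k)
    (hties : ∀ j k, j ≠ k → P {ω | Uhat j ω = Uhat k ω} = 0)
    (M : Fin m) (hM : ∀ k, U k ≤ U M) :
    U M - ∑ k, Real.exp (-2 * (U M - U k) ^ 2 / ∑ l, (q l) ^ 2 * (A k l + A M l))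
        * (U M - U k) ≤ uZ
      ∧ uZ ≤ U M :=
  cmes_coarse_partition_expected_welfare_bounds_general P L' q m π N hN Y hmeas hrange μ hmean
    hindep Uhat hUhat U hU A hA uZ huZ hties M hM
end

section
/- Let Φ denote the cumulative distribution function of the standard normal distribution, let α ∈ (0,1), and let c := Φ^{-1}(1−α). Then for every measurable function φ: ℝ → [0,1] with ∫ φ dN(0,1) = α, the one-sided threshold test satisfies: for every b > 0, ∫ 1{x > c} dN(b,1) ≥ ∫ φ dN(b,1), and for every b < 0, ∫ 1{x > c} dN(b,1) ≤ ∫ φ dN(b,1). -/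
open MeasureTheory ProbabilityTheory Real

/-! The density of `N(b,1)` with respect to `N(0,1)` is `L_b x = exp (b x - b² / 2)`, and
`x ↦ b L_b x` is nondecreasing for every sign of `b`. With `f = 1{· > c} - φ`, which is `≥ 0`
right of `c` and `≤ 0` left of it, this gives `0 ≤ f x (b L_b x - b L_b c)` pointwise. Integrating
against `N(0,1)`, where `f` has mean zero, yields `0 ≤ b ∫ f dN(b,1)` (Neyman–Pearson). -/

theorem integral_mul_nonneg_of_integral_eq_zero {Ω : Type*} [MeasurableSpace Ω] {ν : Measure Ω}
    {f L : Ω → ℝ} (k : ℝ) (hf : Integrable f ν) (hfL : Integrable (fun x ↦ f x * L x) ν)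
    (hmean : ∫ x, f x ∂ν = 0) (hsign : ∀ᵐ x ∂ν, 0 ≤ f x * (L x - k)) :
    0 ≤ ∫ x, f x * L x ∂ν :=
  calc 0 ≤ ∫ x, f x * (L x - k) ∂ν := integral_nonneg_of_ae hsign
    _ = ∫ x, f x * L x ∂ν - k * ∫ x, f x ∂ν := by
      simp only [mul_sub]
      rw [integral_sub hfL (hf.mul_const k), integral_mul_const, mul_comm]
    _ = ∫ x, f x * L x ∂ν := by rw [hmean, mul_zero, sub_zero]

theorem indicator_Ioi_sub_mul_sub_nonneg {g φ : ℝ → ℝ} (hg : Monotone g) (c x : ℝ)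
    (hφ : φ x ∈ Set.Icc (0 : ℝ) 1) :
    0 ≤ ((Set.Ioi c).indicator 1 x - φ x) * (g x - g c) := by
  rcases le_or_gt x c with hxc | hcx
  · rw [Set.indicator_of_notMem (Set.notMem_Ioi.2 hxc)]
    exact mul_nonneg_of_nonpos_of_nonpos (by linarith [hφ.1]) (sub_nonpos.2 (hg hxc))
  · rw [Set.indicator_of_mem (Set.mem_Ioi.2 hcx), Pi.one_apply]
    exact mul_nonneg (by linarith [hφ.2]) (sub_nonneg.2 (hg hcx.le))

theorem monotone_mul_exp_mul_sub (b s : ℝ) : Monotone fun x ↦ b * exp (b * x - s) := by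
  intro x y hxy
  rcases le_total 0 b with hb | hb
  · exact mul_le_mul_of_nonneg_left (exp_le_exp.2 (by nlinarith)) hb
  · exact mul_le_mul_of_nonpos_left (exp_le_exp.2 (by nlinarith)) hb

theorem gaussianPDFReal_eq_mul_exp (b x : ℝ) :
    gaussianPDFReal b 1 x = gaussianPDFReal 0 1 x * exp (b * x - b ^ 2 / 2) := by
  simp only [gaussianPDFReal, NNReal.coe_one, mul_one, sub_zero, mul_assoc, ← exp_add]
  ring_nf

theorem integral_gaussianReal_eq_integral_mul_exp (b : ℝ) (g : ℝ → ℝ) :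
    ∫ x, g x ∂gaussianReal b 1 = ∫ x, g x * exp (b * x - b ^ 2 / 2) ∂gaussianReal 0 1 := by
  simp only [integral_gaussianReal_eq_integral_smul one_ne_zero, smul_eq_mul,
    gaussianPDFReal_eq_mul_exp b]
  congr 1 with x
  ring

theorem integrable_exp_mul_sub_gaussianReal (b s : ℝ) :
    Integrable (fun x ↦ exp (b * x - s)) (gaussianReal 0 1) := by
  simpa only [exp_sub] using (integrable_exp_mul_gaussianReal b).div_const (exp s)

theorem integrable_of_forall_mem_Icc {Ω : Type*} [MeasurableSpace Ω] {μ : Measure Ω}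
    [IsFiniteMeasure μ] {φ : Ω → ℝ} (hφ : Measurable φ) (hφrange : ∀ x, φ x ∈ Set.Icc (0 : ℝ) 1) :
    Integrable φ μ :=
  .of_bound hφ.aestronglyMeasurable 1 <| .of_forall fun x ↦ by
    rw [Real.norm_eq_abs, abs_le]
    constructor <;> linarith [(hφrange x).1, (hφrange x).2]

theorem mul_sub_integral_nonneg_of_threshold (b c : ℝ) {φ : ℝ → ℝ} (hφ : Measurable φ)
    (hφrange : ∀ x, φ x ∈ Set.Icc (0 : ℝ) 1)
    (hsize : ∫ x, φ x ∂gaussianReal 0 1 = (gaussianReal 0 1).real (Set.Ioi c)) :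
    0 ≤ b * ((gaussianReal b 1).real (Set.Ioi c) - ∫ x, φ x ∂gaussianReal b 1) := by
  set ψ : ℝ → ℝ := (Set.Ioi c).indicator 1
  set L : ℝ → ℝ := fun x ↦ b * exp (b * x - b ^ 2 / 2)
  have hψ : ∀ μ : ℝ, Integrable ψ (gaussianReal μ 1) :=
    fun _ ↦ (integrable_const 1).indicator measurableSet_Ioi
  have hφint : ∀ μ : ℝ, Integrable φ (gaussianReal μ 1) := fun _ ↦ integrable_of_forall_mem_Icc hφ hφrange
  have hreal : ∀ μ : ℝ, (gaussianReal μ 1).real (Set.Ioi c) = ∫ x, ψ x ∂gaussianReal μ 1 :=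
    fun _ ↦ (integral_indicator_one measurableSet_Ioi).symm
  have hbound : ∀ x, ‖ψ x - φ x‖ ≤ 1 := fun x ↦ by
    rw [Real.norm_eq_abs, abs_le]
    by_cases hx : x ∈ Set.Ioi c <;> simp only [ψ, Set.indicator, hx, if_true, if_false,
      Pi.one_apply] <;> constructor <;> linarith [(hφrange x).1, (hφrange x).2]
  have hfL : Integrable (fun x ↦ (ψ x - φ x) * L x) (gaussianReal 0 1) :=
    ((integrable_exp_mul_sub_gaussianReal b _).const_mul b).bdd_mul
      ((measurable_one.indicator measurableSet_Ioi).sub hφ).aestronglyMeasurable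
      (.of_forall hbound)
  calc 0 ≤ ∫ x, (ψ x - φ x) * L x ∂gaussianReal 0 1 :=
        integral_mul_nonneg_of_integral_eq_zero (L c) ((hψ 0).sub (hφint 0)) hfL
          (by rw [integral_sub (hψ 0) (hφint 0), hsize, hreal, sub_self])
          (.of_forall fun x ↦ indicator_Ioi_sub_mul_sub_nonneg
            (monotone_mul_exp_mul_sub b _) c x (hφrange x))
    _ = b * ((gaussianReal b 1).real (Set.Ioi c) - ∫ x, φ x ∂gaussianReal b 1) := by
      rw [hreal, ← integral_sub (hψ b) (hφint b), integral_gaussianReal_eq_integral_mul_exp b,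
        ← integral_const_mul]
      congr 1 with x
      ring

theorem gaussian_threshold_test_optimality_general
    (α : ℝ) (c : ℝ)
    (hc : ((gaussianReal 0 1) (Set.Iic c)).toReal = 1 - α)
    (φ : ℝ → ℝ) (hφmeas : Measurable φ) (hφrange : ∀ x, φ x ∈ Set.Icc (0 : ℝ) 1)
    (hφsize : ∫ x, φ x ∂(gaussianReal 0 1) = α) :
    (∀ b : ℝ, 0 < b →
        ∫ x, φ x ∂(gaussianReal b 1) ≤ ((gaussianReal b 1) (Set.Ioi c)).toReal)
    ∧ (∀ b : ℝ, b < 0 →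
        ((gaussianReal b 1) (Set.Ioi c)).toReal ≤ ∫ x, φ x ∂(gaussianReal b 1)) := by
  have hsize : ∫ x, φ x ∂gaussianReal 0 1 = (gaussianReal 0 1).real (Set.Ioi c) := by
    rw [← Set.compl_Iic, probReal_compl_eq_one_sub measurableSet_Iic, measureReal_def, hc,
      hφsize, sub_sub_cancel]
  have key b := mul_sub_integral_nonneg_of_threshold b c hφmeas hφrange hsize
  simp only [measureReal_def] at key
  refine ⟨fun b hb ↦ ?_, fun b hb ↦ ?_⟩
  · linarith [nonneg_of_mul_nonneg_right (key b) hb]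
  · nlinarith [key b]

/-- **Neyman–Pearson in the Gaussian location family.** For `α ∈ (0,1)` and
`c = Φ⁻¹(1−α)`, among all randomized tests `φ : ℝ → [0,1]` of size `α` under `N(0,1)`,
the threshold test `1{x > c}` maximizes power against every `b > 0` and minimizes the
rejection probability against every `b < 0`. -/
theorem gaussian_threshold_test_optimality
    (α : ℝ) (hα : α ∈ Set.Ioo (0 : ℝ) 1) (c : ℝ)
    (hc : ((gaussianReal 0 1) (Set.Iic c)).toReal = 1 - α)
    (φ : ℝ → ℝ) (hφmeas : Measurable φ) (hφrange : ∀ x, φ x ∈ Set.Icc (0 : ℝ) 1)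
    (hφsize : ∫ x, φ x ∂(gaussianReal 0 1) = α) :
    (∀ b : ℝ, 0 < b →
        ∫ x, φ x ∂(gaussianReal b 1) ≤ ((gaussianReal b 1) (Set.Ioi c)).toReal)
    ∧ (∀ b : ℝ, b < 0 →
        ((gaussianReal b 1) (Set.Ioi c)).toReal ≤ ∫ x, φ x ∂(gaussianReal b 1)) :=
  gaussian_threshold_test_optimality_general α c hc φ hφmeas hφrange hφsize
end

section
/- Define the maximal regret of the threshold rule with cutoff c ∈ ℝ in the Gaussian shift experiment by ρ(c) := sup_{b∈ℝ} b·(1{b > 0} − (1 − Φ(c − b))), where Φ is the standard normal cumulative distribution function. Then ρ attains its infimum over ℝ uniquely at c = 0; that is, ρ(0) ≤ ρ(c) for every c ∈ ℝ, with equality only if c = 0. -/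
/-!
Using `Φ (-t) = 1 - Φ t`, the regret of cutoff `c` at shift `b` is `|b| * Φ (±c - |b|)`, the sign
being that of `b`. For `c = 0` its supremum is the maximum of `s * Φ (-s)`, attained at some
`s₀ > 0` because `s * Φ (-s) ≤ 1 / s` by Chebyshev. Placing `b = ±s₀` on the side of `c` gives
regret `s₀ * Φ (|c| - s₀) > s₀ * Φ (-s₀)` by strict monotonicity of `Φ`.
-/

open MeasureTheory ProbabilityTheory Filter Set

namespace GaussianShift

variable {μ : Measure ℝ} [IsProbabilityMeasure μ]

lemma continuous_cdf [NullSingletonClass μ] : Continuous (cdf μ) := by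
  refine continuous_iff_continuousAt.2 fun a => ?_
  rw [(cdf μ).mono.continuousAt_iff_leftLim_eq_rightLim, StieltjesFunction.rightLim_eq]
  have h := (cdf μ).measure_singleton a
  rw [measure_cdf, measure_singleton, eq_comm, ENNReal.ofReal_eq_zero, sub_nonpos] at h
  exact le_antisymm ((cdf μ).mono.leftLim_le le_rfl) h

lemma strictMono_cdf (hμ : volume ≪ μ) : StrictMono (cdf μ) := by
  intro s t hst
  have h := (cdf μ).measure_Ioc s t
  rw [measure_cdf] at h
  have hpos : μ (Ioc s t) ≠ 0 := fun h0 => hst.not_ge (by simpa using hμ h0)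
  rw [h, ne_eq, ENNReal.ofReal_eq_zero, not_le, sub_pos] at hpos
  exact hpos

lemma cdf_pos (hμ : volume ≪ μ) (t : ℝ) : 0 < cdf μ t :=
  (cdf_nonneg μ (t - 1)).trans_lt (strictMono_cdf hμ (by linarith))

lemma cdf_neg [NullSingletonClass μ] (hμ : μ.map Neg.neg = μ) (t : ℝ) :
    cdf μ (-t) = 1 - cdf μ t := by
  have hIic : μ.real (Iic (-t)) = μ.real (Ici t) := by
    conv_lhs => rw [← hμ]
    rw [map_measureReal_apply measurable_neg measurableSet_Iic]
    congr 1
    ext x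
    simp
  rw [cdf_eq_real, cdf_eq_real, hIic, ← compl_Iio, probReal_compl_eq_one_sub measurableSet_Iio,
    measureReal_congr Iio_ae_eq_Iic]

lemma cdf_neg_le_variance_div_sq (hμ : MemLp id 2 μ) (hmean : μ[id] = 0) {t : ℝ} (ht : 0 < t) :
    cdf μ (-t) ≤ Var[id; μ] / t ^ 2 := by
  have h := meas_ge_le_variance_div_sq hμ ht
  rw [hmean] at h
  rw [cdf_eq_real]
  calc μ.real (Iic (-t)) ≤ μ.real {x | t ≤ |id x - 0|} := by
        refine measureReal_mono (fun x hx => ?_)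
        simp only [mem_Iic] at hx
        simp only [id, sub_zero, mem_ofPred_eq]
        exact le_abs.2 (Or.inr (by linarith))
    _ ≤ Var[id; μ] / t ^ 2 :=
        ENNReal.toReal_le_of_le_ofReal (div_nonneg (variance_nonneg _ _) (sq_nonneg t)) h

lemma exists_forall_mul_cdf_neg_le [NullSingletonClass μ] (hμ : volume ≪ μ) {C : ℝ}
    (htail : ∀ t, 0 < t → cdf μ (-t) ≤ C / t ^ 2) :
    ∃ s₀, 0 < s₀ ∧ ∀ s, s * cdf μ (-s) ≤ s₀ * cdf μ (-s₀) := by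
  set g : ℝ → ℝ := fun s => s * cdf μ (-s)
  have hg : Continuous g := continuous_id.mul (continuous_cdf.comp continuous_neg)
  have hg_nonpos : ∀ s ≤ 0, g s ≤ 0 := fun s hs =>
    mul_nonpos_of_nonpos_of_nonneg hs (cdf_nonneg _ _)
  have hg1 : 0 < g 1 := by simpa [g] using cdf_pos hμ (-1)
  have hcocompact : ∀ᶠ s in cocompact ℝ, g s ≤ g 1 := by
    rw [cocompact_eq_atBot_atTop, eventually_sup]
    refine ⟨(eventually_le_atBot 0).mono fun s hs => (hg_nonpos s hs).trans hg1.le,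
      (eventually_gt_atTop (max 0 (C / g 1))).mono fun s hs => ?_⟩
    have hs0 : 0 < s := (le_max_left _ _).trans_lt hs
    calc g s ≤ s * (C / s ^ 2) := mul_le_mul_of_nonneg_left (htail s hs0) hs0.le
      _ = C / s := by field_simp
      _ ≤ g 1 := by
        rw [div_le_iff₀ hs0]
        have := (div_lt_iff₀ hg1).1 ((le_max_right _ _).trans_lt hs)
        linarith
  obtain ⟨s₀, hs₀⟩ := hg.exists_forall_ge' 1 hcocompact
  refine ⟨s₀, ?_, hs₀⟩
  by_contra! h
  exact (hg1.trans_le (hs₀ 1)).not_ge (hg_nonpos s₀ h)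

lemma cdf_gaussianReal_neg {v : NNReal} (hv : v ≠ 0) (t : ℝ) :
    cdf (gaussianReal 0 v) (-t) = 1 - cdf (gaussianReal 0 v) t := by
  have := nullSingletonClass_gaussianReal (μ := 0) hv
  exact cdf_neg (by rw [gaussianReal_map_neg, neg_zero]) t

lemma exists_forall_mul_cdf_gaussianReal_neg_le {v : NNReal} (hv : v ≠ 0) :
    ∃ s₀, 0 < s₀ ∧ ∀ s, s * cdf (gaussianReal 0 v) (-s) ≤ s₀ * cdf (gaussianReal 0 v) (-s₀) := by
  have := nullSingletonClass_gaussianReal (μ := 0) hv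
  refine exists_forall_mul_cdf_neg_le (C := v) (gaussianReal_absolutelyContinuous' 0 hv)
    fun t ht => ?_
  have h := cdf_neg_le_variance_div_sq (μ := gaussianReal 0 v) (memLp_id_gaussianReal 2)
    integral_id_gaussianReal ht
  rwa [variance_id_gaussianReal] at h

/-- The regret at shift `b` of the threshold rule `1{Δ > c}`, where `Δ - b` has cdf `Φ`. -/
noncomputable def regret (Φ : ℝ → ℝ) (c b : ℝ) : ℝ :=
  b * ((if 0 < b then (1 : ℝ) else 0) - (1 - Φ (c - b)))

section Regret

variable {Φ : ℝ → ℝ}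

lemma regret_eq_abs_mul (hΦ : ∀ t, Φ (-t) = 1 - Φ t) (c b : ℝ) :
    regret Φ c b = |b| * Φ ((if 0 < b then c else -c) - |b|) := by
  unfold regret
  split_ifs with hb
  · rw [abs_of_pos hb]; ring
  · rw [abs_of_nonpos (not_lt.1 hb), show -c - -b = -(c - b) by ring, hΦ]; ring

lemma regret_zero (hΦ : ∀ t, Φ (-t) = 1 - Φ t) (b : ℝ) : regret Φ 0 b = |b| * Φ (-|b|) := by
  simp [regret_eq_abs_mul hΦ]

lemma regret_le_abs_mul (hΦ : ∀ t, Φ (-t) = 1 - Φ t) (hmono : Monotone Φ) (c b : ℝ) :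
    regret Φ c b ≤ |b| * Φ (|c| - |b|) := by
  rw [regret_eq_abs_mul hΦ]
  refine mul_le_mul_of_nonneg_left (hmono (sub_le_sub_right ?_ _)) (abs_nonneg b)
  split_ifs
  · exact le_abs_self c
  · exact neg_le_abs c

lemma regret_ite_nonneg (hΦ : ∀ t, Φ (-t) = 1 - Φ t) (c : ℝ) {t : ℝ} (ht : 0 < t) :
    regret Φ c (if 0 ≤ c then t else -t) = t * Φ (|c| - t) := by
  rw [regret_eq_abs_mul hΦ]
  by_cases hc : 0 ≤ c
  · rw [if_pos hc, if_pos ht, abs_of_pos ht, abs_of_nonneg hc]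
  · rw [if_neg hc, if_neg (by linarith), abs_neg, abs_of_pos ht, abs_of_neg (not_le.1 hc)]

lemma mul_apply_sub_le (hΦ₀ : ∀ t, 0 ≤ Φ t) (hΦ₁ : ∀ t, Φ t ≤ 1) {M : ℝ}
    (hM : ∀ s, s * Φ (-s) ≤ M) (d t : ℝ) : t * Φ (d - t) ≤ M + |d| := by
  have hd : d * Φ (d - t) ≤ |d| := by
    refine (le_abs_self _).trans ?_
    rw [abs_mul, abs_of_nonneg (hΦ₀ _)]
    exact mul_le_of_le_one_right (abs_nonneg d) (hΦ₁ _)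
  calc t * Φ (d - t) = (t - d) * Φ (-(t - d)) + d * Φ (d - t) := by rw [neg_sub]; ring
    _ ≤ M + |d| := add_le_add (hM _) hd

lemma bddAbove_range_regret (hΦ : ∀ t, Φ (-t) = 1 - Φ t) (hmono : Monotone Φ)
    (hΦ₀ : ∀ t, 0 ≤ Φ t) (hΦ₁ : ∀ t, Φ t ≤ 1) {M : ℝ} (hM : ∀ s, s * Φ (-s) ≤ M) (c : ℝ) :
    BddAbove (range (regret Φ c)) :=
  ⟨M + |c|, forall_mem_range.2 fun b =>
    (regret_le_abs_mul hΦ hmono c b).trans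
      ((mul_apply_sub_le hΦ₀ hΦ₁ hM |c| |b|).trans_eq (by rw [abs_abs]))⟩

theorem iSup_regret_zero_lt (hΦ : ∀ t, Φ (-t) = 1 - Φ t) (hmono : StrictMono Φ)
    (hΦ₀ : ∀ t, 0 ≤ Φ t) (hΦ₁ : ∀ t, Φ t ≤ 1) {s₀ : ℝ} (hs₀ : 0 < s₀)
    (hmax : ∀ s, s * Φ (-s) ≤ s₀ * Φ (-s₀)) {c : ℝ} (hc : c ≠ 0) :
    ⨆ b, regret Φ 0 b < ⨆ b, regret Φ c b :=
  calc ⨆ b, regret Φ 0 b ≤ s₀ * Φ (-s₀) :=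
        ciSup_le fun b => (regret_zero hΦ b).le.trans (hmax _)
    _ < s₀ * Φ (|c| - s₀) := mul_lt_mul_of_pos_left (hmono (by linarith [abs_pos.2 hc])) hs₀
    _ = regret Φ c (if 0 ≤ c then s₀ else -s₀) := (regret_ite_nonneg hΦ c hs₀).symm
    _ ≤ ⨆ b, regret Φ c b := le_ciSup (bddAbove_range_regret hΦ hmono.monotone hΦ₀ hΦ₁ hmax c) _

end Regret

end GaussianShift

open GaussianShift

/-- The maximal regret `ρ(c) := sup_b b·(1{b>0} − (1 − Φ(c − b)))` of the
threshold rule with cutoff `c` in the Gaussian shift experiment attains its infimum over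
`ℝ` uniquely at `c = 0`. -/
theorem gaussian_shift_minimax_cutoff_zero
    (Φ : ℝ → ℝ) (hΦ : ∀ t, Φ t = ((gaussianReal 0 1) (Set.Iic t)).toReal)
    (ρ : ℝ → ℝ)
    (hρ : ∀ c, ρ c = ⨆ b : ℝ, b * ((if 0 < b then (1 : ℝ) else 0) - (1 - Φ (c - b)))) :
    ∀ c : ℝ, ρ 0 ≤ ρ c ∧ (ρ c = ρ 0 → c = 0) := by
  obtain rfl : Φ = cdf (gaussianReal 0 1) := funext fun t => (hΦ t).trans (cdf_eq_real _ t).symm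
  obtain ⟨s₀, hs₀, hmax⟩ := exists_forall_mul_cdf_gaussianReal_neg_le one_ne_zero
  intro c
  rcases eq_or_ne c 0 with rfl | hc
  · simp
  have hlt : ρ 0 < ρ c := by
    rw [hρ, hρ]
    exact iSup_regret_zero_lt (cdf_gaussianReal_neg one_ne_zero)
      (strictMono_cdf (gaussianReal_absolutelyContinuous' 0 one_ne_zero)) (cdf_nonneg _)
      (cdf_le_one _) hs₀ hmax hc
  exact ⟨hlt.le, fun h => absurd h hlt.ne'⟩
end

section
/- For every measurable φ: ℝ → [0,1], the zero-threshold rule is minimax for the regret risk in the Gaussian shift experiment: sup_{b∈ℝ} b·(1{b > 0} − ∫ 1{x > 0} dN(b,1)) ≤ sup_{b∈ℝ} b·(1{b > 0} − ∫ φ dN(b,1)). -/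
/-!
Pair each shift `a ≥ 0` with `-a`. The regrets of a rule `φ` at `a` and at `-a` add up to
`a * (1 - (∫ φ dN(a,1) - ∫ φ dN(-a,1)))`, and by the Neyman–Pearson lemma the difference of
integrals is largest for the zero-threshold rule, since the likelihood ratio of `N(a,1)` to
`N(-a,1)` is increasing. By the symmetry `x ↦ -x`, the threshold rule has the same regret at `a`
and at `-a`, so this regret is at most the larger of the two regrets of `φ`.
-/

open MeasureTheory ProbabilityTheory Set
open scoped NNReal

/-- The Neyman–Pearson lemma, with `g` the difference of the two densities. -/
theorem integral_mul_le_integral_mul_indicator {α : Type*} [MeasurableSpace α] {μ : Measure α}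
    {g φ : α → ℝ} {s : Set α} (hg : Integrable g μ) (hφ : AEStronglyMeasurable φ μ)
    (hφ01 : ∀ x, φ x ∈ Icc 0 1) (hs : MeasurableSet s)
    (hg_pos : ∀ x ∈ s, 0 ≤ g x) (hg_neg : ∀ x ∉ s, g x ≤ 0) :
    ∫ x, g x * φ x ∂μ ≤ ∫ x, g x * s.indicator 1 x ∂μ := by
  refine integral_mono (hg.mul_bdd hφ (c := 1) (ae_of_all _ fun x => ?_))
    (hg.mul_bdd (measurable_one.indicator hs).aestronglyMeasurable (c := 1)
      (ae_of_all _ fun x => ?_)) fun x => ?_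
  · rw [Real.norm_of_nonneg (hφ01 x).1]
    exact (hφ01 x).2
  · by_cases hx : x ∈ s <;> simp [hx]
  · obtain ⟨h0, h1⟩ := hφ01 x
    by_cases hx : x ∈ s
    · simp only [indicator_of_mem hx, Pi.one_apply, mul_one]
      nlinarith [hg_pos x hx]
    · simp only [indicator_of_notMem hx, mul_zero]
      nlinarith [hg_neg x hx]

theorem gaussianPDFReal_le_gaussianPDFReal {μ μ' x : ℝ} (v : ℝ≥0)
    (h : (x - μ') ^ 2 ≤ (x - μ) ^ 2) : gaussianPDFReal μ v x ≤ gaussianPDFReal μ' v x := by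
  unfold gaussianPDFReal
  gcongr

theorem integral_gaussianReal_sub_integral_gaussianReal {φ : ℝ → ℝ} (hφ : Measurable φ)
    (hφ01 : ∀ x, φ x ∈ Icc 0 1) {v : ℝ≥0} (hv : v ≠ 0) (b b' : ℝ) :
    ∫ x, φ x ∂gaussianReal b v - ∫ x, φ x ∂gaussianReal b' v
      = ∫ x, (gaussianPDFReal b v x - gaussianPDFReal b' v x) * φ x := by
  have h_int (c : ℝ) : Integrable (fun x => gaussianPDFReal c v x * φ x) :=
    (integrable_gaussianPDFReal c v).mul_bdd hφ.aestronglyMeasurable (c := 1)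
      (ae_of_all _ fun x => by rw [Real.norm_of_nonneg (hφ01 x).1]; exact (hφ01 x).2)
  simp_rw [integral_gaussianReal_eq_integral_smul hv, smul_eq_mul, sub_mul]
  exact (integral_sub (h_int b) (h_int b')).symm

noncomputable def thresholdRule : ℝ → ℝ := (Ioi 0).indicator 1

theorem measurable_thresholdRule : Measurable thresholdRule :=
  measurable_one.indicator measurableSet_Ioi

theorem thresholdRule_mem_Icc (x : ℝ) : thresholdRule x ∈ Icc 0 1 := by
  by_cases hx : x ∈ Ioi 0 <;> simp [thresholdRule, hx]

theorem integral_thresholdRule (μ : Measure ℝ) : ∫ x, thresholdRule x ∂μ = μ.real (Ioi 0) :=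
  integral_indicator_one measurableSet_Ioi

theorem integral_thresholdRule_gaussianReal_neg {v : ℝ≥0} (hv : v ≠ 0) (b : ℝ) :
    ∫ x, thresholdRule x ∂gaussianReal (-b) v = 1 - ∫ x, thresholdRule x ∂gaussianReal b v := by
  have := nullSingletonClass_gaussianReal (μ := b) hv
  rw [integral_thresholdRule, integral_thresholdRule, ← gaussianReal_map_neg,
    map_measureReal_apply measurable_neg measurableSet_Ioi,
    ← probReal_compl_eq_one_sub measurableSet_Ioi, compl_Ioi, neg_preimage, neg_Ioi, neg_zero]
  exact measureReal_congr Iio_ae_eq_Iic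

theorem integral_gaussianReal_sub_le_thresholdRule {φ : ℝ → ℝ} (hφ : Measurable φ)
    (hφ01 : ∀ x, φ x ∈ Icc 0 1) {v : ℝ≥0} (hv : v ≠ 0) {a : ℝ} (ha : 0 ≤ a) :
    ∫ x, φ x ∂gaussianReal a v - ∫ x, φ x ∂gaussianReal (-a) v
      ≤ ∫ x, thresholdRule x ∂gaussianReal a v - ∫ x, thresholdRule x ∂gaussianReal (-a) v := by
  rw [integral_gaussianReal_sub_integral_gaussianReal hφ hφ01 hv,
    integral_gaussianReal_sub_integral_gaussianReal measurable_thresholdRule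
      thresholdRule_mem_Icc hv]
  refine integral_mul_le_integral_mul_indicator
    ((integrable_gaussianPDFReal a v).sub (integrable_gaussianPDFReal (-a) v))
    hφ.aestronglyMeasurable hφ01 measurableSet_Ioi (fun x hx => ?_) (fun x hx => ?_)
  · exact sub_nonneg.2 (gaussianPDFReal_le_gaussianPDFReal v (by nlinarith [mem_Ioi.1 hx]))
  · exact sub_nonpos.2 (gaussianPDFReal_le_gaussianPDFReal v (by nlinarith [notMem_Ioi.1 hx]))

noncomputable def regret (φ : ℝ → ℝ) (b : ℝ) : ℝ :=
  b * ((if 0 < b then 1 else 0) - ∫ x, φ x ∂gaussianReal b 1)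

theorem regret_add_regret_neg (φ : ℝ → ℝ) {a : ℝ} (ha : 0 ≤ a) :
    regret φ a + regret φ (-a)
      = a * (1 - (∫ x, φ x ∂gaussianReal a 1 - ∫ x, φ x ∂gaussianReal (-a) 1)) := by
  rcases ha.eq_or_lt with rfl | ha
  · simp [regret]
  · rw [regret, regret, if_pos ha, if_neg (by linarith)]
    ring

theorem regret_thresholdRule_neg (b : ℝ) : regret thresholdRule (-b) = regret thresholdRule b := by
  rw [regret, regret, integral_thresholdRule_gaussianReal_neg one_ne_zero]
  rcases lt_trichotomy b 0 with hb | rfl | hb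
  · rw [if_pos (neg_pos.2 hb), if_neg hb.not_gt]
    ring
  · simp
  · rw [if_neg (by linarith), if_pos hb]
    ring

theorem two_mul_regret_thresholdRule_le {φ : ℝ → ℝ} (hφ : Measurable φ)
    (hφ01 : ∀ x, φ x ∈ Icc 0 1) {a : ℝ} (ha : 0 ≤ a) :
    2 * regret thresholdRule a ≤ regret φ a + regret φ (-a) := by
  calc 2 * regret thresholdRule a = regret thresholdRule a + regret thresholdRule (-a) := by
        rw [regret_thresholdRule_neg]; ring
    _ ≤ regret φ a + regret φ (-a) := by
        rw [regret_add_regret_neg _ ha, regret_add_regret_neg _ ha]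
        exact mul_le_mul_of_nonneg_left (sub_le_sub_left
          (integral_gaussianReal_sub_le_thresholdRule hφ hφ01 one_ne_zero ha) 1) ha

theorem regret_thresholdRule_le_max {φ : ℝ → ℝ} (hφ : Measurable φ)
    (hφ01 : ∀ x, φ x ∈ Icc 0 1) (b : ℝ) :
    regret thresholdRule b ≤ max (regret φ b) (regret φ (-b)) := by
  suffices h : ∀ a, 0 ≤ a → regret thresholdRule a ≤ max (regret φ a) (regret φ (-a)) by
    rcases le_total 0 b with hb | hb
    · exact h b hb
    · simpa [regret_thresholdRule_neg, max_comm] using h (-b) (neg_nonneg.2 hb)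
  intro a ha
  linarith [two_mul_regret_thresholdRule_le hφ hφ01 ha,
    le_max_left (regret φ a) (regret φ (-a)), le_max_right (regret φ a) (regret φ (-a))]

/-- The zero-threshold rule `1{x > 0}` is minimax for the regret risk
`b·(1{b>0} − ∫ φ dN(b,1))` in the Gaussian shift experiment: its maximal regret over `b ∈ ℝ`
is no larger than that of any randomized rule `φ : ℝ → [0,1]`. (The regret risk is
nonnegative, so we compare the suprema in `ℝ≥0∞` via `ENNReal.ofReal`.) -/
theorem gaussian_zero_threshold_minimax
    (φ : ℝ → ℝ) (hφmeas : Measurable φ) (hφrange : ∀ x, φ x ∈ Set.Icc (0 : ℝ) 1) :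
    (⨆ b : ℝ, ENNReal.ofReal
        (b * ((if 0 < b then (1 : ℝ) else 0) - ((gaussianReal b 1) (Set.Ioi 0)).toReal)))
      ≤ ⨆ b : ℝ, ENNReal.ofReal
          (b * ((if 0 < b then (1 : ℝ) else 0) - ∫ x, φ x ∂(gaussianReal b 1))) := by
  have h_threshold (b : ℝ) :
      b * ((if 0 < b then (1 : ℝ) else 0) - ((gaussianReal b 1) (Set.Ioi 0)).toReal)
        = regret thresholdRule b := by
    rw [regret, integral_thresholdRule, measureReal_def]
  simp_rw [h_threshold]
  refine iSup_le fun b => ?_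
  calc ENNReal.ofReal (regret thresholdRule b)
      ≤ max (ENNReal.ofReal (regret φ b)) (ENNReal.ofReal (regret φ (-b))) := by
        rw [← ENNReal.ofReal_max]
        exact ENNReal.ofReal_le_ofReal (regret_thresholdRule_le_max hφmeas hφrange b)
    _ ≤ ⨆ b : ℝ, ENNReal.ofReal (regret φ b) :=
        max_le (le_iSup_of_le b le_rfl) (le_iSup_of_le (-b) le_rfl)
end
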